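/- Let U be uniformly distributed on {0,1}^ñ and let Z be any random variable taking values in {0,1}^ñ (jointly distributed with U). Suppose Pr[Z = U] ≥ 1 − ε and that ε is small enough that 2√ε + 2^{−ñ} ≤ 1/e. Then I(Z;U) ≥ (1 − 5√ε)·ñ − η(2√ε), where η(x) := −x·lg x. -/

import Mathlib

open scoped BigOperators ComplexOrder

noncomputable section

namespace IQ

/-- |α₀₀⟩ = |0⟩ -/
def ket00 : Fin 2 → ℂ := ![1, 0]
/-- |α₁₁⟩ = |1⟩ -/
def ket11 : Fin 2 → ℂ := ![0, 1]
/-- |α₀₁⟩ = |+⟩ -/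
def ketP : Fin 2 → ℂ := ![((Real.sqrt 2 : ℝ) : ℂ)⁻¹, ((Real.sqrt 2 : ℝ) : ℂ)⁻¹]
/-- |α₁₀⟩ = |−⟩ -/
def ketM : Fin 2 → ℂ := ![((Real.sqrt 2 : ℝ) : ℂ)⁻¹, -((Real.sqrt 2 : ℝ) : ℂ)⁻¹]

/-- the single-qubit states |α_{bc}⟩ -/
def alpha (b c : Fin 2) : Fin 2 → ℂ :=
  if b = c then (if b = 0 then ket00 else ket11)
  else (if b = 0 then ketP else ketM)

/-- ⟨ψ| M |ψ⟩ (real part) -/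
def expVal (M : Matrix (Fin 2) (Fin 2) ℂ) (ψ : Fin 2 → ℂ) : ℝ :=
  (dotProduct (star ψ) (M.mulVec ψ)).re

/-- A 1-pass LOCC strategy with `q`-outcome measurements on `n` isolated qubits:
an adaptive decision tree which, at step `a`, given the previous outcomes,
chooses a not-yet-measured qubit and a single-qubit POVM with `q` outcomes. -/
structure Strategy (n q : ℕ) where
  qubit : (a : Fin n) → (Fin a.val → Fin q) → Fin n
  povm : (a : Fin n) → (Fin a.val → Fin q) → Fin q → Matrix (Fin 2) (Fin 2) ℂ
  povm_psd : ∀ a z ζ, (povm a z ζ).PosSemidef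
  povm_sum : ∀ a z, ∑ ζ, povm a z ζ = 1
  onePass : ∀ z : Fin n → Fin q,
    Function.Injective (fun a : Fin n => qubit a (fun i => z (Fin.castLE a.isLt.le i)))

/-- the prefix z_{<a} of an outcome string -/
def pre {m q : ℕ} (z : Fin m → Fin q) (a : Fin m) : Fin a.val → Fin q :=
  fun i => z (Fin.castLE a.isLt.le i)

/-- Pr[Z = z] when the strategy `M` is applied to the product state `⊗ᵢ ψᵢ`. -/
def outcomeProb {n q : ℕ} (M : Strategy n q) (ψ : Fin n → Fin 2 → ℂ) (z : Fin n → Fin q) : ℝ :=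
  ∏ a : Fin n, expVal (M.povm a (pre z a) (z a)) (ψ (M.qubit a (pre z a)))

/-- probability of the outcomes of the first `m` steps of a strategy -/
def prefixProb {n q : ℕ} (M : Strategy n q) (ψ : Fin n → Fin 2 → ℂ) {m : ℕ} (hm : m ≤ n)
    (z : Fin m → Fin q) : ℝ :=
  ∏ a : Fin m, expVal (M.povm (Fin.castLE hm a) (pre z a) (z a))
    (ψ (M.qubit (Fin.castLE hm a) (pre z a)))

/-- the product state |E(u)⟩, as the list of its single-qubit factors -/
def stateOf {n nt : ℕ} (E : (Fin nt → Fin 2) → Fin n → Fin 2 × Fin 2) (u : Fin nt → Fin 2) :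
    Fin n → Fin 2 → ℂ :=
  fun a => alpha (E u a).1 (E u a).2

/-- Shannon entropy (in bits) of a finitely supported distribution -/
def shannon {σ : Type*} [Fintype σ] (p : σ → ℝ) : ℝ :=
  ∑ x, -(p x * Real.logb 2 (p x))

/-- mutual information I(Z;U) = H(Z) + H(U) − H(Z,U) of a joint distribution
`P z u = Pr[Z = z, U = u]` -/
def mutualInfo {σ τ : Type*} [Fintype σ] [Fintype τ] (P : σ → τ → ℝ) : ℝ :=
  shannon (fun z => ∑ u, P z u) + shannon (fun u => ∑ z, P z u)
    - shannon (fun p : σ × τ => P p.1 p.2)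

/-- conditional entropy H(U|Z) = H(Z,U) − H(Z) of a joint distribution -/
def condEnt {σ τ : Type*} [Fintype σ] [Fintype τ] (P : σ → τ → ℝ) : ℝ :=
  shannon (fun p : σ × τ => P p.1 p.2) - shannon (fun z => ∑ u, P z u)

/-- collision (Rényi 2-) entropy of the normalization of a nonnegative weight function -/
def condH2 {σ : Type*} [Fintype σ] (w : σ → ℝ) : ℝ :=
  -Real.logb 2 (∑ u, (w u / ∑ v, w v)^2)

/-- η(x) = −x·lg x -/
def eta (x : ℝ) : ℝ := -(x * Real.logb 2 x)

/-- binary entropy function -/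
def binEnt (p : ℝ) : ℝ := -(p * Real.logb 2 p) - ((1-p) * Real.logb 2 (1-p))

/-- the joint distribution of (Z,U) in the state discrimination game:
U uniform on {0,1}^ñ, Z the output of strategy `M` on |E(U)⟩ -/
def gameDist {n nt q : ℕ} (M : Strategy n q)
    (E : (Fin nt → Fin 2) → Fin n → Fin 2 × Fin 2) :
    (Fin n → Fin q) → (Fin nt → Fin 2) → ℝ :=
  fun z u => ((2:ℝ)^nt)⁻¹ * outcomeProb M (stateOf E u) z

/-- probability of an event under the uniform distribution on a finite type -/
def prFin {α : Type*} [Fintype α] (P : α → Prop) : ℝ :=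
  haveI := Classical.decPred P
  ((Finset.univ.filter P).card : ℝ) / (Fintype.card α : ℝ)

/-- expectation of a function under the uniform distribution on a finite type -/
def expFin {α : Type*} [Fintype α] (f : α → ℝ) : ℝ :=
  (∑ a, f a) / (Fintype.card α : ℝ)

/-- operator norm of a matrix (largest singular value) -/
def opNormM {ι : Type*} [Fintype ι] [DecidableEq ι] (M : Matrix ι ι ℂ) : ℝ :=
  ‖Matrix.toEuclideanCLM (𝕜 := ℂ) M‖

/-- Frobenius norm of a matrix -/
def frobNorm {ι κ : Type*} [Fintype ι] [Fintype κ] (M : Matrix ι κ ℂ) : ℝ :=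
  Real.sqrt (∑ i, ∑ j, ‖M i j‖^2)

/-- the set 𝒮_q of q-outcome single-qubit POVMs all of whose elements have rank one -/
def Sq (q : ℕ) : Set (Fin q → Matrix (Fin 2) (Fin 2) ℂ) :=
  {M | (∀ i, (M i).PosSemidef ∧ (M i).rank = 1) ∧ ∑ i, M i = 1}

/-- the metric t(M, M̃) = maxᵢ ‖Mᵢ − M̃ᵢ‖ on 𝒮_q -/
def tDist {q : ℕ} (M M' : Fin q → Matrix (Fin 2) (Fin 2) ℂ) : ℝ :=
  ⨆ i, opNormM (M i - M' i)

/-- `L` is an ε-net for 𝒮_q with respect to the metric `tDist` -/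
def IsNet {q : ℕ} (L : Finset (Fin q → Matrix (Fin 2) (Fin 2) ℂ)) (ε : ℝ) : Prop :=
  ∀ M ∈ Sq q, ∃ M' ∈ L, tDist M M' ≤ ε

/-- the n-qubit product state |E(s,t)⟩ of the one-time memory, as the list of its factors -/
def otmState {n k : ℕ} (C D : (Fin k → Fin 2) → Fin n → Fin 2)
    (s t : Fin k → Fin 2) : Fin n → Fin 2 → ℂ :=
  fun a => alpha (C s a) (D t a)

/-- the joint distribution of (Z,(S,T)): S,T uniform on {0,1}^k,
Z the output of strategy `M` on |E(S,T)⟩ -/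
def otmGame {n k q : ℕ} (M : Strategy n q) (C D : (Fin k → Fin 2) → Fin n → Fin 2) :
    (Fin n → Fin q) → ((Fin k → Fin 2) × (Fin k → Fin 2)) → ℝ :=
  fun z st => ((4:ℝ)^k)⁻¹ * outcomeProb M (otmState C D st.1 st.2) z


/-! Fano's inequality bounds the uncertainty left about U after guessing it as Z with success
probability c: H(U|Z) ≤ h(c) + (1 − c)·lg(2^ñ − 1) ≤ η(c) + η(1 − c) + (1 − c)·ñ. As U is
uniform, H(U) = ñ and I(Z;U) = H(U) − H(U|Z). Since 0 ≤ 1 − c ≤ min(ε, 1) ≤ √ε, the term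
η(c) ≤ (1 − c)/ln 2 is absorbed into 4√ε·ñ, and η(1 − c) ≤ η(2√ε) because η increases on [0, 1/e].

Fano's inequality itself comes from splitting H(U|Z) = ∑ P(z,u)·lg(P_Z(z)/P(z,u)) into its
diagonal and off-diagonal parts and applying the log-sum inequality to each. -/

open Real Finset

lemma sum_mul_log_div_le {ι : Type*} (s : Finset ι) {a b : ι → ℝ} {B : ℝ}
    (ha : ∀ i ∈ s, 0 ≤ a i) (hab : ∀ i ∈ s, a i ≤ b i) (hB : ∑ i ∈ s, b i ≤ B) :
    ∑ i ∈ s, a i * log (b i / a i) ≤ (∑ i ∈ s, a i) * log (B / ∑ i ∈ s, a i) := by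
  set A := ∑ i ∈ s, a i
  rcases (sum_nonneg ha).eq_or_lt with hA | hA
  · have hzero : ∀ i ∈ s, a i = 0 := (sum_eq_zero_iff_of_nonneg ha).1 hA.symm
    rw [show A = 0 from hA.symm, zero_mul]
    exact (sum_eq_zero fun i hi => by rw [hzero i hi, zero_mul]).le
  have hB0 : 0 < B := hA.trans_le ((sum_le_sum hab).trans hB)
  -- `log x ≤ x - 1` at `x = (b i / a i) / (B / A)`, termwise
  have hterm : ∀ i ∈ s, a i * log (b i / a i) ≤ a i * log (B / A) + (b i * (A / B) - a i) := by
    intro i hi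
    rcases (ha i hi).eq_or_lt with hai | hai
    · rw [← hai]
      simp only [zero_mul, div_zero, log_zero, zero_add, sub_zero]
      exact mul_nonneg (hai ▸ hab i hi) (div_nonneg hA.le hB0.le)
    have hbi : 0 < b i := hai.trans_le (hab i hi)
    have hlog := log_le_sub_one_of_pos (x := (b i / a i) / (B / A)) (by positivity)
    rw [log_div (by positivity) (by positivity)] at hlog
    have hscale : a i * ((b i / a i) / (B / A) - 1) = b i * (A / B) - a i := by
      field_simp
    nlinarith
  calc ∑ i ∈ s, a i * log (b i / a i)
      ≤ ∑ i ∈ s, (a i * log (B / A) + (b i * (A / B) - a i)) := sum_le_sum hterm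
    _ = A * log (B / A) + ((∑ i ∈ s, b i) * (A / B) - A) := by
        rw [sum_add_distrib, sum_sub_distrib, ← sum_mul, ← sum_mul]
    _ ≤ A * log (B / A) := by
        have : (∑ i ∈ s, b i) * (A / B) ≤ B * (A / B) := by gcongr
        rw [mul_div_cancel₀ A hB0.ne'] at this
        linarith

lemma eta_eq_negMulLog_div (x : ℝ) : eta x = negMulLog x / log 2 := by
  simp only [eta, negMulLog, logb]
  ring

lemma sum_mul_logb_div_le {ι : Type*} (s : Finset ι) {a b : ι → ℝ} {B : ℝ}
    (ha : ∀ i ∈ s, 0 ≤ a i) (hab : ∀ i ∈ s, a i ≤ b i) (hB : ∑ i ∈ s, b i ≤ B) :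
    ∑ i ∈ s, a i * logb 2 (b i / a i)
      ≤ (∑ i ∈ s, a i) * logb 2 B + eta (∑ i ∈ s, a i) := by
  set A := ∑ i ∈ s, a i
  have hrhs : A * logb 2 B + eta A = A * log (B / A) / log 2 := by
    rcases (sum_nonneg ha).eq_or_lt with hA | hA
    · simp [show A = 0 from hA.symm, eta]
    have hB0 : 0 < B := hA.trans_le ((sum_le_sum hab).trans hB)
    rw [log_div hB0.ne' hA.ne']
    simp only [eta, logb]
    ring
  rw [hrhs]
  simp only [logb, ← mul_div_assoc, ← sum_div]
  exact div_le_div_of_nonneg_right (sum_mul_log_div_le s ha hab hB) (log_pos one_lt_two).le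

lemma negMulLog_monotoneOn : MonotoneOn negMulLog (Set.Icc 0 (exp (-1))) := by
  refine monotoneOn_of_deriv_nonneg (convex_Icc _ _) continuous_negMulLog.continuousOn
    (differentiableOn_negMulLog.mono fun x hx => ?_) fun x hx => ?_
  all_goals rw [interior_Icc] at hx
  · exact hx.1.ne'
  · rw [deriv_negMulLog hx.1.ne']
    linarith [(log_le_iff_le_exp hx.1).2 hx.2.le]

lemma eta_monotoneOn : MonotoneOn eta (Set.Icc 0 (exp (-1))) := fun x hx y hy hxy => by
  simp only [eta_eq_negMulLog_div]
  exact div_le_div_of_nonneg_right (negMulLog_monotoneOn hx hy hxy) (log_pos one_lt_two).le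

lemma eta_le_two_mul_one_sub {x : ℝ} (hx0 : 0 ≤ x) (hx1 : x ≤ 1) : eta x ≤ 2 * (1 - x) := by
  have hlog2 : 1 / 2 < log 2 := by linarith [log_two_gt_d9]
  rw [eta_eq_negMulLog_div, div_le_iff₀ (by linarith)]
  nlinarith [negMulLog_le_one_sub_self hx0]

lemma binEnt_eq_eta_add_eta (p : ℝ) : binEnt p = eta p + eta (1 - p) := by
  simp only [binEnt, eta]
  ring

lemma shannon_uniform {σ : Type*} [Fintype σ] [Nonempty σ] :
    shannon (fun _ : σ => ((Fintype.card σ : ℝ))⁻¹) = logb 2 (Fintype.card σ) := by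
  have hcard : (Fintype.card σ : ℝ) ≠ 0 := by positivity
  simp only [shannon, sum_const, card_univ, nsmul_eq_mul, logb_inv]
  field_simp

lemma mutualInfo_eq_shannon_sub_condEnt {σ τ : Type*} [Fintype σ] [Fintype τ]
    (P : σ → τ → ℝ) : mutualInfo P = shannon (fun u => ∑ z, P z u) - condEnt P := by
  simp only [mutualInfo, condEnt]
  ring

lemma condEnt_eq_sum_mul_logb_div {σ τ : Type*} [Fintype σ] [Fintype τ] {P : σ → τ → ℝ}
    (hpos : ∀ z u, 0 ≤ P z u) :
    condEnt P = ∑ p : σ × τ, P p.1 p.2 * logb 2 ((∑ u, P p.1 u) / P p.1 p.2) := by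
  have hmarg : shannon (fun z => ∑ u, P z u)
      = ∑ p : σ × τ, -(P p.1 p.2 * logb 2 (∑ u, P p.1 u)) := by
    simp only [shannon, Fintype.sum_prod_type, sum_neg_distrib, sum_mul]
  rw [condEnt, hmarg, shannon, ← sum_sub_distrib]
  refine sum_congr rfl fun p _ => ?_
  rcases (hpos p.1 p.2).eq_or_lt with hP | hP
  · simp [← hP]
  have hmarg_pos : 0 < ∑ u, P p.1 u :=
    hP.trans_le (single_le_sum (fun u _ => hpos p.1 u) (mem_univ p.2))
  rw [logb_div hmarg_pos.ne' hP.ne']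
  ring

lemma sum_eq_sum_diag_add_sum_offDiag {α M : Type*} [Fintype α] [DecidableEq α]
    [AddCommMonoid M] (f : α × α → M) :
    ∑ p, f p = ∑ z, f (z, z) + ∑ p ∈ univ.offDiag, f p := by
  rw [← sum_diag, ← sum_union (disjoint_diag_offDiag _), diag_union_offDiag,
    univ_product_univ]

theorem condEnt_le_binEnt_add_mul_logb_card_sub_one {α : Type*} [Fintype α] {P : α → α → ℝ}
    (hpos : ∀ z u, 0 ≤ P z u) (hsum : ∑ z, ∑ u, P z u = 1) :
    condEnt P ≤ binEnt (∑ z, P z z)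
      + (1 - ∑ z, P z z) * logb 2 (Fintype.card α - 1) := by
  classical
  have hle_marg : ∀ z u, P z u ≤ ∑ u', P z u' := fun z u =>
    single_le_sum (fun u _ => hpos z u) (mem_univ u)
  have hoff_mass : ∑ p ∈ univ.offDiag, P p.1 p.2 = 1 - ∑ z, P z z := by
    have := sum_eq_sum_diag_add_sum_offDiag fun p : α × α => P p.1 p.2
    rw [Fintype.sum_prod_type, hsum] at this
    linarith
  have hoff_marg : ∑ p ∈ univ.offDiag, ∑ u, P p.1 u = Fintype.card α - 1 := by
    have := sum_eq_sum_diag_add_sum_offDiag fun p : α × α => ∑ u, P p.1 u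
    simp only [Fintype.sum_prod_type, sum_const, card_univ, nsmul_eq_mul, ← mul_sum,
      hsum] at this
    linarith
  have hdiag := sum_mul_logb_div_le univ (a := fun z => P z z) (b := fun z => ∑ u, P z u)
    (fun z _ => hpos z z) (fun z _ => hle_marg z z) hsum.le
  have hoff := sum_mul_logb_div_le univ.offDiag (a := fun p => P p.1 p.2)
    (b := fun p => ∑ u, P p.1 u) (fun p _ => hpos p.1 p.2) (fun p _ => hle_marg p.1 p.2)
    hoff_marg.le
  rw [logb_one, mul_zero, zero_add] at hdiag
  rw [hoff_mass] at hoff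
  rw [condEnt_eq_sum_mul_logb_div hpos, sum_eq_sum_diag_add_sum_offDiag, binEnt_eq_eta_add_eta]
  linarith

lemma mutualInfo_eq_logb_card_sub_condEnt {σ τ : Type*} [Fintype σ] [Fintype τ] [Nonempty τ]
    {P : σ → τ → ℝ} (hunif : ∀ u, ∑ z, P z u = ((Fintype.card τ : ℝ))⁻¹) :
    mutualInfo P = logb 2 (Fintype.card τ) - condEnt P := by
  rw [mutualInfo_eq_shannon_sub_condEnt, funext hunif, shannon_uniform]

lemma logb_two_pow_sub_one_le (n : ℕ) : logb 2 ((2 : ℝ) ^ n - 1) ≤ n := by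
  rcases n.eq_zero_or_pos with rfl | hn
  · simp
  calc logb 2 ((2 : ℝ) ^ n - 1) ≤ logb 2 (2 ^ n) :=
        logb_le_logb_of_le one_lt_two (sub_pos.2 (one_lt_pow₀ one_lt_two hn.ne'))
          (sub_le_self _ zero_le_one)
    _ = n := by rw [logb_pow, logb_self_eq_one one_lt_two, mul_one]

lemma eta_add_eta_one_sub_add_mul_le {c s n : ℝ} (hc0 : 0 ≤ c) (hc1 : c ≤ 1) (hcs : 1 - c ≤ s)
    (hs : 2 * s ≤ exp (-1)) (hn : 1 ≤ n) :
    eta c + eta (1 - c) + (1 - c) * n ≤ 5 * s * n + eta (2 * s) := by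
  have heta_c : eta c ≤ 2 * (1 - c) := eta_le_two_mul_one_sub hc0 hc1
  have heta_err : eta (1 - c) ≤ eta (2 * s) :=
    eta_monotoneOn ⟨by linarith, by linarith⟩ ⟨by linarith, hs⟩ (by linarith)
  nlinarith

theorem success_implies_info_general (nt : ℕ) (ε : ℝ)
    (P : (Fin nt → Fin 2) → (Fin nt → Fin 2) → ℝ)
    (hpos : ∀ z u, 0 ≤ P z u)
    (hsum : ∑ z, ∑ u, P z u = 1)
    (hunif : ∀ u, ∑ z, P z u = ((2:ℝ)^nt)⁻¹)
    (hcorr : ∑ u, P u u ≥ 1 - ε)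
    (hsmall : 2 * Real.sqrt ε + ((2:ℝ)^nt)⁻¹ ≤ (Real.exp 1)⁻¹) :
    mutualInfo P ≥ (1 - 5 * Real.sqrt ε) * nt - eta (2 * Real.sqrt ε) := by
  set c := ∑ u, P u u
  have hcard : (Fintype.card (Fin nt → Fin 2) : ℝ) = 2 ^ nt := by simp
  have hnt : (1 : ℝ) ≤ nt := by
    refine Nat.one_le_cast.2 (Nat.pos_of_ne_zero fun h => ?_)
    rw [h, pow_zero, inv_one] at hsmall
    linarith [sqrt_nonneg ε, inv_lt_one_of_one_lt₀ (one_lt_exp_iff.2 one_pos : (1 : ℝ) < exp 1)]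
  have hc0 : 0 ≤ c := sum_nonneg fun u _ => hpos u u
  have hc1 : c ≤ 1 :=
    hsum ▸ sum_le_sum fun z _ => single_le_sum (fun u _ => hpos z u) (mem_univ z)
  have hcs : 1 - c ≤ √ε := (le_sqrt (by linarith) (by linarith)).2 (by nlinarith)
  have hs : 2 * √ε ≤ exp (-1) := by
    rw [exp_neg]
    linarith [inv_pos.2 (pow_pos two_pos nt : (0 : ℝ) < 2 ^ nt)]
  have hinfo := mutualInfo_eq_logb_card_sub_condEnt (P := P) fun u => by
    rw [hunif, hcard]
  have hfano := condEnt_le_binEnt_add_mul_logb_card_sub_one hpos hsum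
  rw [hcard, logb_pow, logb_self_eq_one one_lt_two, mul_one] at hinfo
  rw [hcard, binEnt_eq_eta_add_eta] at hfano
  have hlog := mul_le_mul_of_nonneg_left (logb_two_pow_sub_one_le nt) (sub_nonneg.2 hc1)
  linarith [eta_add_eta_one_sub_add_mul_le hc0 hc1 hcs hs hnt]

/-- If U is uniform on {0,1}^ñ, Z takes values in {0,1}^ñ,
Pr[Z = U] ≥ 1 − ε and 2√ε + 2^{−ñ} ≤ 1/e, then
I(Z;U) ≥ (1 − 5√ε)·ñ − η(2√ε). -/
theorem success_implies_info (nt : ℕ) (ε : ℝ) (hε : 0 ≤ ε)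
    (P : (Fin nt → Fin 2) → (Fin nt → Fin 2) → ℝ)
    (hpos : ∀ z u, 0 ≤ P z u)
    (hsum : ∑ z, ∑ u, P z u = 1)
    (hunif : ∀ u, ∑ z, P z u = ((2:ℝ)^nt)⁻¹)
    (hcorr : ∑ u, P u u ≥ 1 - ε)
    (hsmall : 2 * Real.sqrt ε + ((2:ℝ)^nt)⁻¹ ≤ (Real.exp 1)⁻¹) :
    mutualInfo P ≥ (1 - 5 * Real.sqrt ε) * nt - eta (2 * Real.sqrt ε) :=
  success_implies_info_general nt ε P hpos hsum hunif hcorr hsmall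

end IQ
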